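/- arXiv:2305.03532 — 3 statements merged into one kernel-verified Lean document; each statement's English description precedes it below -/
import Mathlib

section
/- (Proposition 3.) Let σ > 0, M > 0, μ₀ ∈ ℝ, μ₂ ≥ 0, and suppose f*(x) = exp(−μ₀ + μ₂ x²) for x ∈ [0, M] (and 0 outside) is a probability density with second moment ∫ x² f*(x) dx = P̄_harv^req. Then f* maximizes J(f) = (1/2) ln(1 + e^{2 h(f)} / (2π e σ²)) over all probability densities f on [0, M] with ∫ x² f(x) dx ≥ P̄_harv^req, and the maximum value equals J* = (1/2) ln(1 + e^{2 μ₀ − 2 μ₂ P̄_harv^req} / (2π e σ²)). -/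
open MeasureTheory Set

/-- Pointwise identity: for any g vanishing outside [0,M],
    g x * log (fstar x) = -μ₀ * g x + μ₂ * (x^2 * g x). -/
lemma aux_log_fstar (M μ₀ μ₂ : ℝ) (g : ℝ → ℝ)
    (hg : ∀ x, x ∉ Icc (0 : ℝ) M → g x = 0) (x : ℝ) :
    g x * Real.log (Set.indicator (Icc (0 : ℝ) M)
      (fun x => Real.exp (-μ₀ + μ₂ * x ^ 2)) x)
      = -μ₀ * g x + μ₂ * (x ^ 2 * g x) := by
  by_cases hx : x ∈ Icc (0 : ℝ) M
  · rw [Set.indicator_of_mem hx, Real.log_exp]; ring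
  · rw [hg x hx]; ring

/-- Proposition 3: the density f*(x) = exp(−μ₀ + μ₂x²) on [0, M] with second
moment P̄ᵣₑq maximizes the achievable rate J over all densities on [0, M] whose
second moment is at least P̄ᵣₑq, and the maximum rate equals
(1/2) ln(1 + e^{2μ₀ − 2μ₂P̄ᵣₑq}/(2πeσ²)). -/
theorem exp_density_optimal_high_power
    (σ M μ₀ μ₂ Preq : ℝ) (hσ : 0 < σ) (hM : 0 < M) (hμ₂ : 0 ≤ μ₂)
    (fstar : ℝ → ℝ)
    (hfstar : fstar = Set.indicator (Icc (0 : ℝ) M)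
      (fun x => Real.exp (-μ₀ + μ₂ * x ^ 2)))
    (hnorm : ∫ x, fstar x = 1)
    (hmom : ∫ x, x ^ 2 * fstar x = Preq) :
    (∀ f : ℝ → ℝ, Measurable f → (∀ x, 0 ≤ f x) →
      (∀ x, x ∉ Icc (0 : ℝ) M → f x = 0) → (∫ x, f x = 1) →
      Integrable (fun x => f x * Real.log (f x)) →
      (∫ x, x ^ 2 * f x ≥ Preq) →
      (1 / 2) * Real.log (1 + Real.exp (2 * (-∫ x, f x * Real.log (f x))) /
          (2 * Real.pi * Real.exp 1 * σ ^ 2)) ≤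
        (1 / 2) * Real.log (1 + Real.exp (2 * (-∫ x, fstar x * Real.log (fstar x))) /
          (2 * Real.pi * Real.exp 1 * σ ^ 2))) ∧
    (1 / 2) * Real.log (1 + Real.exp (2 * (-∫ x, fstar x * Real.log (fstar x))) /
        (2 * Real.pi * Real.exp 1 * σ ^ 2)) =
      (1 / 2) * Real.log (1 + Real.exp (2 * μ₀ - 2 * μ₂ * Preq) /
        (2 * Real.pi * Real.exp 1 * σ ^ 2)) := by
  have hC : (0:ℝ) < 2 * Real.pi * Real.exp 1 * σ ^ 2 := by positivity
  -- basic facts about fstar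
  have hfszero : ∀ x, x ∉ Icc (0 : ℝ) M → fstar x = 0 := by
    intro x hx; rw [hfstar, Set.indicator_of_notMem hx]
  have hfsmem : ∀ x ∈ Icc (0 : ℝ) M, fstar x = Real.exp (-μ₀ + μ₂ * x ^ 2) := by
    intro x hx; rw [hfstar, Set.indicator_of_mem hx]
  have hfsnonneg : ∀ x, 0 ≤ fstar x := by
    intro x
    by_cases hx : x ∈ Icc (0 : ℝ) M
    · rw [hfsmem x hx]; positivity
    · rw [hfszero x hx]
  have hfsint : Integrable fstar := by
    rw [hfstar, integrable_indicator_iff measurableSet_Icc]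
    exact (Continuous.integrableOn_Icc (by fun_prop))
  have hfsmom : Integrable (fun x => x ^ 2 * fstar x) := by
    have : (fun x => x ^ 2 * fstar x) = Set.indicator (Icc (0 : ℝ) M)
        (fun x => x ^ 2 * Real.exp (-μ₀ + μ₂ * x ^ 2)) := by
      funext x
      by_cases hx : x ∈ Icc (0 : ℝ) M
      · rw [hfsmem x hx, Set.indicator_of_mem hx]
      · rw [hfszero x hx, Set.indicator_of_notMem hx, mul_zero]
    rw [this, integrable_indicator_iff measurableSet_Icc]
    exact (Continuous.integrableOn_Icc (by fun_prop))
  -- entropy of fstar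
  have hlogstar : ∀ x, fstar x * Real.log (fstar x)
      = -μ₀ * fstar x + μ₂ * (x ^ 2 * fstar x) := by
    intro x
    nth_rewrite 2 [hfstar]
    exact aux_log_fstar M μ₀ μ₂ fstar hfszero x
  have hIstar : ∫ x, fstar x * Real.log (fstar x) = -μ₀ + μ₂ * Preq := by
    rw [show (fun x => fstar x * Real.log (fstar x))
        = fun x => -μ₀ * fstar x + μ₂ * (x ^ 2 * fstar x) from funext hlogstar]
    rw [integral_add (hfsint.const_mul _) (hfsmom.const_mul _),
      integral_const_mul, integral_const_mul, hnorm, hmom]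
    ring
  constructor
  · intro f hmeas hpos hzero hint hintlog hmomf
    -- f is integrable
    have hfint : Integrable f := by
      by_contra h
      rw [integral_undef h] at hint
      exact one_ne_zero hint.symm
    -- x^2 * f is integrable
    have hfmom : Integrable (fun x => x ^ 2 * f x) := by
      refine (hfint.const_mul (M ^ 2)).mono
        ((measurable_id.pow_const 2).mul hmeas).aestronglyMeasurable
        (Filter.Eventually.of_forall fun x => ?_)
      by_cases hx : x ∈ Icc (0 : ℝ) M
      · simp only [Real.norm_eq_abs, abs_mul]
        apply mul_le_mul_of_nonneg_right _ (abs_nonneg _)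
        rw [abs_of_nonneg (sq_nonneg x), abs_of_nonneg (by positivity : (0:ℝ) ≤ M ^ 2)]
        have h1 : |x| ≤ M := by
          rw [abs_le]; exact ⟨le_trans (by linarith) hx.1, hx.2⟩
        calc x ^ 2 = |x| ^ 2 := (sq_abs x).symm
          _ ≤ M ^ 2 := by nlinarith [abs_nonneg x]
      · rw [hzero x hx, mul_zero, mul_zero]
    -- f * log fstar is integrable with known value
    have hflogstar_eq : (fun x => f x * Real.log (fstar x))
        = fun x => -μ₀ * f x + μ₂ * (x ^ 2 * f x) := by
      funext x
      rw [hfstar]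
      exact aux_log_fstar M μ₀ μ₂ f hzero x
    have hflogstarint : Integrable (fun x => f x * Real.log (fstar x)) := by
      rw [hflogstar_eq]
      exact (hfint.const_mul _).add (hfmom.const_mul _)
    have hflogstarval : ∫ x, f x * Real.log (fstar x)
        = -μ₀ + μ₂ * ∫ x, x ^ 2 * f x := by
      rw [hflogstar_eq, integral_add (hfint.const_mul _) (hfmom.const_mul _),
        integral_const_mul, integral_const_mul, hint]
      ring
    -- Gibbs inequality pointwise
    have hgibbs : ∀ x, f x * Real.log (fstar x) - f x * Real.log (f x)
        ≤ fstar x - f x := by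
      intro x
      by_cases hx : x ∈ Icc (0 : ℝ) M
      · have hfs : 0 < fstar x := by rw [hfsmem x hx]; positivity
        rcases lt_or_eq_of_le (hpos x) with hfx | hfx
        · have hlog : Real.log (fstar x / f x) ≤ fstar x / f x - 1 :=
            Real.log_le_sub_one_of_pos (div_pos hfs hfx)
          rw [Real.log_div hfs.ne' hfx.ne'] at hlog
          have := mul_le_mul_of_nonneg_left hlog (le_of_lt hfx)
          calc f x * Real.log (fstar x) - f x * Real.log (f x)
              = f x * (Real.log (fstar x) - Real.log (f x)) := by ring
            _ ≤ f x * (fstar x / f x - 1) := this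
            _ = fstar x - f x := by field_simp
        · rw [← hfx]; simp [le_of_lt hfs]
      · rw [hzero x hx, hfszero x hx]; simp
    -- integrate Gibbs
    have hkey : ∫ x, f x * Real.log (f x) ≥ (∫ x, fstar x * Real.log (fstar x)) + μ₂ * ((∫ x, x ^ 2 * f x) - Preq) := by
      have hintineq : ∫ x, (f x * Real.log (fstar x) - f x * Real.log (f x))
          ≤ ∫ x, (fstar x - f x) :=
        integral_mono (hflogstarint.sub hintlog) (hfsint.sub hfint) hgibbs
      rw [integral_sub hflogstarint hintlog, integral_sub hfsint hfint,
        hnorm, hint, sub_self] at hintineq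
      have h1 : ∫ x, f x * Real.log (fstar x) ≤ ∫ x, f x * Real.log (f x) := by
        linarith
      rw [hflogstarval] at h1
      linarith [hIstar]
    -- conclude
    have hfinal : -∫ x, f x * Real.log (f x) ≤ -∫ x, fstar x * Real.log (fstar x) := by
      have h2 : 0 ≤ μ₂ * ((∫ x, x ^ 2 * f x) - Preq) :=
        mul_nonneg hμ₂ (by linarith [hmomf])
      linarith
    have hexp : Real.exp (2 * (-∫ x, f x * Real.log (f x)))
        ≤ Real.exp (2 * (-∫ x, fstar x * Real.log (fstar x))) := by
      apply Real.exp_le_exp.mpr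
      linarith
    gcongr
  · rw [hIstar]
    congr 2
    ring
end

section
/- Let M > 0, μ₀ ∈ ℝ, μ₂ > 0, P > 0, and suppose f*(x) = exp(−μ₀ + μ₂ x²) for x ∈ [0, M] (and 0 outside) is a probability density with ∫ x² f*(x) dx = P. Then μ₀ = μ₂ M² + ln( M / (1 + 2 μ₂ P) ). -/
open MeasureTheory Set

/-- If f*(x) = exp(−μ₀ + μ₂x²) on [0, M] is a probability density with second
moment P, then μ₀ = μ₂M² + ln(M/(1 + 2μ₂P)). -/
theorem mu0_formula
    (M μ₀ μ₂ P : ℝ) (hM : 0 < M) (hμ₂ : 0 < μ₂) (hP : 0 < P)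
    (fstar : ℝ → ℝ)
    (hfstar : fstar = Set.indicator (Icc (0 : ℝ) M)
      (fun x => Real.exp (-μ₀ + μ₂ * x ^ 2)))
    (hnorm : ∫ x, fstar x = 1)
    (hmom : ∫ x, x ^ 2 * fstar x = P) :
    μ₀ = μ₂ * M ^ 2 + Real.log (M / (1 + 2 * μ₂ * P)) := by
  have hc : Continuous fun x : ℝ => Real.exp (-μ₀ + μ₂ * x ^ 2) := by
    continuity
  have h1 : ∫ x in (0:ℝ)..M, Real.exp (-μ₀ + μ₂ * x ^ 2) = 1 := by
    rw [intervalIntegral.integral_of_le hM.le, ← MeasureTheory.integral_Icc_eq_integral_Ioc,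
      ← integral_indicator measurableSet_Icc, ← hfstar, hnorm]
  have h2 : ∫ x in (0:ℝ)..M, x ^ 2 * Real.exp (-μ₀ + μ₂ * x ^ 2) = P := by
    rw [intervalIntegral.integral_of_le hM.le, ← MeasureTheory.integral_Icc_eq_integral_Ioc,
      ← integral_indicator measurableSet_Icc]
    rw [← hmom]
    congr 1
    funext x
    rw [hfstar]
    by_cases hx : x ∈ Icc (0:ℝ) M <;> simp [hx]
  -- FTC
  have hderiv : ∀ x ∈ Set.uIcc (0:ℝ) M, HasDerivAt
      (fun x : ℝ => x * Real.exp (-μ₀ + μ₂ * x ^ 2))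
      (Real.exp (-μ₀ + μ₂ * x ^ 2) + 2 * μ₂ * (x ^ 2 * Real.exp (-μ₀ + μ₂ * x ^ 2))) x := by
    intro x _
    have h1 : HasDerivAt (fun x : ℝ => -μ₀ + μ₂ * x ^ 2) (μ₂ * (2 * x)) x := by
      have := ((hasDerivAt_pow 2 x).const_mul μ₂).const_add (-μ₀)
      simpa using this
    have h2 : HasDerivAt (fun x : ℝ => Real.exp (-μ₀ + μ₂ * x ^ 2))
        (Real.exp (-μ₀ + μ₂ * x ^ 2) * (μ₂ * (2 * x))) x := h1.exp
    have : HasDerivAt (fun y : ℝ => y * Real.exp (-μ₀ + μ₂ * y ^ 2))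
        (1 * Real.exp (-μ₀ + μ₂ * x ^ 2) + id x * (Real.exp (-μ₀ + μ₂ * x ^ 2) * (μ₂ * (2 * x)))) x :=
      (hasDerivAt_id x).mul h2
    convert this using 1
    simp only [id]
    ring
  have hint : IntervalIntegrable
      (fun x => Real.exp (-μ₀ + μ₂ * x ^ 2) + 2 * μ₂ * (x ^ 2 * Real.exp (-μ₀ + μ₂ * x ^ 2)))
      volume 0 M := by
    exact (hc.add (continuous_const.mul ((continuous_pow 2).mul hc))).intervalIntegrable 0 M
  have hftc := intervalIntegral.integral_eq_sub_of_hasDerivAt hderiv hint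
  have hia : IntervalIntegrable (fun x => Real.exp (-μ₀ + μ₂ * x ^ 2)) volume 0 M :=
    hc.intervalIntegrable 0 M
  have hib : IntervalIntegrable (fun x => 2 * μ₂ * (x ^ 2 * Real.exp (-μ₀ + μ₂ * x ^ 2)))
      volume 0 M := by
    exact (continuous_const.mul ((continuous_pow 2).mul hc)).intervalIntegrable 0 M
  rw [intervalIntegral.integral_add hia hib, h1, intervalIntegral.integral_const_mul, h2] at hftc
  -- hftc : 1 + 2 * μ₂ * P = M * exp (-μ₀ + μ₂ * M^2) - 0 * exp ...
  have key : M * Real.exp (-μ₀ + μ₂ * M ^ 2) = 1 + 2 * μ₂ * P := by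
    rw [hftc]; ring
  have hpos : (0:ℝ) < 1 + 2 * μ₂ * P := by positivity
  have hlog := congrArg Real.log key
  rw [Real.log_mul (ne_of_gt hM) (Real.exp_pos _).ne', Real.log_exp] at hlog
  rw [Real.log_div (ne_of_gt hM) (ne_of_gt hpos)]
  linarith
end

section
/- Let M > 0, μ₀ ∈ ℝ, μ₂ > 0, P > 0, and suppose f*(x) = exp(−μ₀ + μ₂ x²) for x ∈ [0, M] (and 0 outside) is a probability density with ∫ x² f*(x) dx = P. Then the multiplier μ₂ satisfies (1 + 2 μ₂ P) · ∫₀^M e^{μ₂ x²} dx = M e^{μ₂ M²}. -/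
open MeasureTheory Set

/-- If f*(x) = exp(−μ₀ + μ₂x²) on [0, M] is a probability density with second
moment P, then the multiplier μ₂ satisfies
(1 + 2μ₂P) ∫₀^M e^{μ₂x²} dx = M e^{μ₂M²}. -/
theorem mu2_transcendental_equation
    (M μ₀ μ₂ P : ℝ) (hM : 0 < M) (hμ₂ : 0 < μ₂) (hP : 0 < P)
    (fstar : ℝ → ℝ)
    (hfstar : fstar = Set.indicator (Icc (0 : ℝ) M)
      (fun x => Real.exp (-μ₀ + μ₂ * x ^ 2)))
    (hnorm : ∫ x, fstar x = 1)
    (hmom : ∫ x, x ^ 2 * fstar x = P) :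
    (1 + 2 * μ₂ * P) * ∫ x in (0 : ℝ)..M, Real.exp (μ₂ * x ^ 2) =
      M * Real.exp (μ₂ * M ^ 2) := by
  subst hfstar
  have hM' : (0:ℝ) ≤ M := hM.le
  have cont : Continuous fun x : ℝ => Real.exp (μ₂ * x ^ 2) := by continuity
  have cont2 : Continuous fun x : ℝ => x ^ 2 * Real.exp (μ₂ * x ^ 2) := by continuity
  set I := ∫ x in (0:ℝ)..M, Real.exp (μ₂ * x ^ 2) with hI
  set J := ∫ x in (0:ℝ)..M, x ^ 2 * Real.exp (μ₂ * x ^ 2) with hJ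
  set e := Real.exp (-μ₀) with he
  -- rewrite hnorm
  rw [MeasureTheory.integral_indicator measurableSet_Icc,
    MeasureTheory.integral_Icc_eq_integral_Ioc,
    ← intervalIntegral.integral_of_le hM'] at hnorm
  have hnorm' : e * I = 1 := by
    rw [← hnorm, hI, ← intervalIntegral.integral_const_mul]
    congr 1; funext x; rw [Real.exp_add]
  -- rewrite hmom
  have hmom2 : (fun x => x ^ 2 *
      (Icc (0:ℝ) M).indicator (fun x => Real.exp (-μ₀ + μ₂ * x ^ 2)) x)
      = (Icc (0:ℝ) M).indicator (fun x => x ^ 2 * Real.exp (-μ₀ + μ₂ * x ^ 2)) := by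
    funext x
    by_cases hx : x ∈ Icc (0:ℝ) M <;> simp [Set.indicator, hx]
  rw [hmom2, MeasureTheory.integral_indicator measurableSet_Icc,
    MeasureTheory.integral_Icc_eq_integral_Ioc,
    ← intervalIntegral.integral_of_le hM'] at hmom
  have hmom' : e * J = P := by
    rw [← hmom, hJ, ← intervalIntegral.integral_const_mul]
    congr 1; funext x; rw [Real.exp_add]; ring
  -- FTC : ∫₀^M (e^{μ₂x²} + 2μ₂ x² e^{μ₂x²}) = M e^{μ₂M²}
  have hderiv : ∀ x ∈ Set.uIcc (0:ℝ) M, HasDerivAt (fun x : ℝ => x * Real.exp (μ₂ * x ^ 2))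
      (Real.exp (μ₂ * x ^ 2) + 2 * μ₂ * (x ^ 2 * Real.exp (μ₂ * x ^ 2))) x := by
    intro x _
    have h1 : HasDerivAt (fun x : ℝ => μ₂ * x ^ 2) (μ₂ * (2 * x)) x := by
      simpa using ((hasDerivAt_pow 2 x).const_mul μ₂)
    have h2 := (h1.exp)
    have h3 : HasDerivAt (fun x : ℝ => x * Real.exp (μ₂ * x ^ 2)) _ x := (hasDerivAt_id' x).mul h2
    convert h3 using 1
    ring
  have hint : Continuous fun x : ℝ =>
      Real.exp (μ₂ * x ^ 2) + 2 * μ₂ * (x ^ 2 * Real.exp (μ₂ * x ^ 2)) := by continuity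
  have key : I + 2 * μ₂ * J = M * Real.exp (μ₂ * M ^ 2) := by
    have := intervalIntegral.integral_eq_sub_of_hasDerivAt hderiv
      (hint.intervalIntegrable 0 M)
    rw [intervalIntegral.integral_add (cont.intervalIntegrable 0 M)
      ((cont2.intervalIntegrable 0 M).const_mul (2 * μ₂)),
      intervalIntegral.integral_const_mul] at this
    simpa using this
  linear_combination key - 2*μ₂*I*hmom' + 2*μ₂*J*hnorm'
end
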